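/- For any α ∈ ℕ_0^N, the rank function satisfies r_{Φα} = r_α ∘ w_0, where Φα = (α_2, α_3, ..., α_N, α_1 + 1) and w_0 is the N-cycle (1,2,...,N) with w_0(i) = i+1 for i < N and w_0(N) = 1. -/

import Mathlib

/-!
The rank `r_β(i)` counts the `j` with `β i < β j ∨ (j ≤ i ∧ β j = β i)`, i.e. the position of `i`
when indices are sorted by decreasing value with ties broken by position. Passing from `α` to
`Φα` relabels position `j` as `w₀ j`; the only index whose relative position changes is the last
one, which `w₀` sends to the front, and the `+ 1` on its value is exactly what restores its
comparisons. So `j` counts towards `r_{Φα}(i)` iff `w₀ j` counts towards `r_α(w₀ i)`, and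
reindexing the count along the bijection `w₀` gives the claim.
-/

open Finset

theorem card_filter_lt_add_card_filter_le_and_eq {ι κ : Type*} [Fintype ι] [LinearOrder ι]
    [LinearOrder κ] (β : ι → κ) (i : ι) :
    #{j | β i < β j} + #{j | j ≤ i ∧ β j = β i} = #{j | β i < β j ∨ j ≤ i ∧ β j = β i} := by
  rw [filter_or, card_union_of_disjoint]
  exact disjoint_filter.2 fun j _ hlt ⟨_, heq⟩ => hlt.ne' heq

def affineStep {n : ℕ} (α : Fin (n + 1) → ℕ) (k : Fin (n + 1)) : ℕ :=
  α (finRotate _ k) + if k = Fin.last n then 1 else 0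

theorem affineStep_lt_or_le_and_eq_iff {n : ℕ} (α : Fin (n + 1) → ℕ) (i j : Fin (n + 1)) :
    (affineStep α i < affineStep α j ∨ j ≤ i ∧ affineStep α j = affineStep α i) ↔
      (α (finRotate _ i) < α (finRotate _ j) ∨
        finRotate _ j ≤ finRotate _ i ∧ α (finRotate _ j) = α (finRotate _ i)) := by
  have hi := Fin.val_lt_last (i := i)
  have hj := Fin.val_lt_last (i := j)
  rw [Fin.le_def, Fin.le_def, coe_finRotate, coe_finRotate, affineStep, affineStep]
  simp only [Fin.ext_iff, Fin.val_last] at hi hj ⊢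
  split_ifs <;> omega

theorem rank_of_affine_step (N : ℕ) (hN : 0 < N) (α Φα : Fin N → ℕ)
    (w₀ : Fin N → Fin N)
    (hΦ : ∀ i : Fin N, Φα i = if h : (i : ℕ) + 1 < N then α ⟨(i : ℕ) + 1, h⟩ else α ⟨0, hN⟩ + 1)
    (hw : ∀ i : Fin N, (w₀ i : ℕ) = if (i : ℕ) + 1 < N then (i : ℕ) + 1 else 0)
    (rk : (Fin N → ℕ) → Fin N → ℕ)
    (hrk : ∀ (β : Fin N → ℕ) (i : Fin N),
      rk β i = (Finset.univ.filter (fun j : Fin N => β j > β i)).card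
        + (Finset.univ.filter (fun j : Fin N => j ≤ i ∧ β j = β i)).card) :
    ∀ i : Fin N, rk Φα i = rk α (w₀ i) := by
  obtain ⟨n, rfl⟩ := Nat.exists_eq_add_one_of_ne_zero hN.ne'
  have hw₀ : w₀ = finRotate (n + 1) := by
    ext i
    induction i using Fin.lastCases <;> simp [hw]
  have hΦα : Φα = affineStep α := by
    ext i
    induction i using Fin.lastCases with
    | last => simp [hΦ, affineStep]
    | cast i => simp [hΦ, affineStep, Fin.succ]
  subst hw₀ hΦα
  intro i
  simp only [hrk, gt_iff_lt, card_filter_lt_add_card_filter_le_and_eq]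
  exact card_equiv (finRotate (n + 1)) fun j => by
    simp only [mem_filter, mem_univ, true_and, affineStep_lt_or_le_and_eq_iff]
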